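/- Assume A₁ := Ē₁(α₀₂)·α₀₂^μ/(L₁ₘ·μ) + L̄₁·α₀₂^{2μ}/(2μ·L₁ₘ²) < 1/D*. Let z, z̃ ∈ [α₀₁, α₀₂] with z ≤ z̃, and let f₁^z ∈ C[0,z] and f₁^{z̃} ∈ C[0,z̃] be fixed points of U^z and U^{z̃} respectively. Then sup_{η∈[0,z]} |f₁^z(η) − f₁^{z̃}(η)| ≤ (D*·α₀₂^{μ−1}/((1 − D*·A₁)·L₁ₘ))·|z − z̃|. -/
import Mathlib

open Real Set Filter MeasureTheory Topology

noncomputable section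

/-- Sup norm on `C[0,z]`. -/
def supIcc (z : ℝ) (g : ℝ → ℝ) : ℝ := ⨆ η : Icc (0:ℝ) z, |g η.1|

/-- `E₁^z(η,f) = exp(−z·a·∫₀^η N*(f)(s)/L*(f)(s) ds)`. -/
def E1z (z a : ℝ) (Lstar Nstar : (ℝ → ℝ) → ℝ → ℝ) (f : ℝ → ℝ) (η : ℝ) : ℝ :=
  Real.exp (-(z * a * ∫ s in (0:ℝ)..η, Nstar f s / Lstar f s))

/-- `F₁^z(η,f) = ∫₀^η E₁^z(s,f)/(s·L*(f)(s)) ds`. -/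
def F1z (z a : ℝ) (Lstar Nstar : (ℝ → ℝ) → ℝ → ℝ) (f : ℝ → ℝ) (η : ℝ) : ℝ :=
  ∫ s in (0:ℝ)..η, E1z z a Lstar Nstar f s / (s * Lstar f s)

/-- `U^z(f)(η) = D*·(F₁^z(z,f) − F₁^z(η,f))`. -/
def Uz (z a Dstar : ℝ) (Lstar Nstar : (ℝ → ℝ) → ℝ → ℝ) (f : ℝ → ℝ) (η : ℝ) : ℝ :=
  Dstar * (F1z z a Lstar Nstar f z - F1z z a Lstar Nstar f η)

/-- `Ē₁(w)`. -/
def Ebar1 (a μ ν L1m N1M Lbar1 Nbar1 : ℝ) (w : ℝ) : ℝ :=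
  (w * a / L1m) * (Nbar1 * w ^ (μ + 1) / (μ + 1) +
    Lbar1 * N1M * w ^ (2 * μ - ν + 1) / (L1m * (2 * μ - ν + 1)))

/-- helper: if `c * s ^ (-p) ≤ L` then `1 / L ≤ s ^ p / c`. -/
lemma one_div_le_rpow_div {c p s L : ℝ} (hc : 0 < c) (hs : 0 < s)
    (hL : c * s ^ (-p) ≤ L) : 1 / L ≤ s ^ p / c := by
  have hpos : 0 < c * s ^ (-p) := mul_pos hc (Real.rpow_pos_of_pos hs _)
  have h1 : 1 / L ≤ 1 / (c * s ^ (-p)) := one_div_le_one_div_of_le hpos hL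
  refine h1.trans_eq ?_
  rw [Real.rpow_neg hs.le]
  have hsp : (0:ℝ) < s ^ p := Real.rpow_pos_of_pos hs _
  field_simp

lemma exp_neg_sub_le {x y : ℝ} (hx : 0 ≤ x) (h : x ≤ y) :
    Real.exp (-x) - Real.exp (-y) ≤ y - x := by
  have h1 : Real.exp (-y) = Real.exp (-x) * Real.exp (x - y) := by
    rw [← Real.exp_add]; ring_nf
  have h2 : 1 - Real.exp (x - y) ≤ y - x := by
    have := Real.add_one_le_exp (x - y); linarith
  have h3 : Real.exp (-x) ≤ 1 := Real.exp_le_one_iff.2 (by linarith)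
  have h4 : 0 ≤ 1 - Real.exp (x - y) := by
    have : Real.exp (x - y) ≤ 1 := Real.exp_le_one_iff.2 (by linarith)
    linarith
  calc Real.exp (-x) - Real.exp (-y) = Real.exp (-x) * (1 - Real.exp (x - y)) := by
        rw [h1]; ring
    _ ≤ 1 * (y - x) := mul_le_mul h3 h2 h4 zero_le_one
    _ = y - x := one_mul _

lemma exp_neg_lip {x y : ℝ} (hx : 0 ≤ x) (hy : 0 ≤ y) :
    |Real.exp (-x) - Real.exp (-y)| ≤ |x - y| := by
  rcases le_total x y with h | h
  · have h1 := exp_neg_sub_le hx h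
    have h2 : Real.exp (-y) ≤ Real.exp (-x) := Real.exp_le_exp.2 (by linarith)
    rw [abs_of_nonneg (by linarith), abs_of_nonpos (by linarith : x - y ≤ 0)]
    linarith
  · have h1 := exp_neg_sub_le hy h
    have h2 : Real.exp (-x) ≤ Real.exp (-y) := Real.exp_le_exp.2 (by linarith)
    rw [abs_of_nonpos (by linarith), abs_of_nonneg (by linarith : 0 ≤ x - y)]
    linarith

lemma exp_neg_sub_le_of_ratio {c x y : ℝ} (hx : 0 ≤ x) (hxy : x ≤ y) (hc : 0 ≤ c)
    (hyx : y - x ≤ c * x) : Real.exp (-x) - Real.exp (-y) ≤ c := by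
  have h1 : Real.exp (-y) = Real.exp (-x) * Real.exp (x - y) := by
    rw [← Real.exp_add]; ring_nf
  have h2 : 1 - Real.exp (x - y) ≤ y - x := by
    have := Real.add_one_le_exp (x - y); linarith
  have h5 : Real.exp (-x) - Real.exp (-y) ≤ (y - x) * Real.exp (-x) := by
    calc Real.exp (-x) - Real.exp (-y) = (1 - Real.exp (x - y)) * Real.exp (-x) := by
          rw [h1]; ring
      _ ≤ (y - x) * Real.exp (-x) :=
        mul_le_mul_of_nonneg_right h2 (Real.exp_pos _).le
  have h6 : x * Real.exp (-x) ≤ 1 := by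
    have hx' : x ≤ Real.exp x := by have := Real.add_one_le_exp x; linarith
    calc x * Real.exp (-x) ≤ Real.exp x * Real.exp (-x) :=
          mul_le_mul_of_nonneg_right hx' (Real.exp_pos _).le
      _ = 1 := by rw [← Real.exp_add]; simp
  calc Real.exp (-x) - Real.exp (-y) ≤ (y - x) * Real.exp (-x) := h5
    _ ≤ (c * x) * Real.exp (-x) :=
        mul_le_mul_of_nonneg_right hyx (Real.exp_pos _).le
    _ = c * (x * Real.exp (-x)) := by ring
    _ ≤ c * 1 := mul_le_mul_of_nonneg_left h6 hc
    _ = c := mul_one _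

lemma ae_Icc_pos {b : ℝ} {P : ℝ → Prop} (h : ∀ x ∈ Ioc (0:ℝ) b, P x) :
    ∀ᵐ x ∂(volume.restrict (Icc (0:ℝ) b)), P x := by
  have h0 : ∀ᵐ (x : ℝ) ∂volume, x ≠ 0 := by
    rw [ae_iff]
    have hset : {x : ℝ | ¬x ≠ 0} = {0} := by ext x; simp
    rw [hset]; exact measure_singleton 0
  filter_upwards [ae_restrict_mem measurableSet_Icc, ae_restrict_of_ae h0] with x hx hx0
  exact h x ⟨hx.1.lt_of_ne (Ne.symm hx0), hx.2⟩

lemma integral_const_rpow' {c p : ℝ} (w : ℝ) (hp : 0 < p) :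
    ∫ s in (0:ℝ)..w, c * s ^ p = c * w ^ (p + 1) / (p + 1) := by
  rw [intervalIntegral.integral_const_mul, integral_rpow (Or.inl (by linarith))]
  rw [Real.zero_rpow (by positivity)]
  ring

lemma II_mono_of_le {f : ℝ → ℝ} {a b c d : ℝ} (h : IntervalIntegrable f volume a b)
    (hab : a ≤ b) (hac : a ≤ c) (hcd : c ≤ d) (hdb : d ≤ b) :
    IntervalIntegrable f volume c d := by
  refine h.mono_set ?_
  rw [uIcc_of_le hcd, uIcc_of_le hab]
  exact Icc_subset_Icc hac hdb

lemma abs_div_bound2 {A L bA binv : ℝ} (hL : 0 < L) (hA : |A| ≤ bA) (hinv : 1/L ≤ binv)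
    (hbA : 0 ≤ bA) : |A / L| ≤ bA * binv := by
  rw [abs_div, abs_of_pos hL, div_eq_mul_one_div]
  exact mul_le_mul hA hinv (by positivity) hbA

lemma abs_div_bound3 {N dL L bN bdL binv : ℝ} (hL : 0 < L)
    (hN : |N| ≤ bN) (hdL : |dL| ≤ bdL) (hinv : 1/L ≤ binv) (hbN : 0 ≤ bN) (hbdL : 0 ≤ bdL) :
    |N * dL / L| ≤ bN * bdL * binv := by
  rw [abs_div, abs_of_pos hL, div_eq_mul_one_div, abs_mul]
  exact mul_le_mul (mul_le_mul hN hdL (abs_nonneg _) hbN) hinv (by positivity)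
    (mul_nonneg hbN hbdL)

set_option maxHeartbeats 3000000 in
theorem statement16
    (a Dstar μ ν L1m L1M N1m N1M Lbar1 Nbar1 α₀₁ α₀₂ : ℝ)
    (ha : 0 < a) (hD : 0 < Dstar)
    (hμpos : 0 < μ) (hνpos : 0 < ν) (hL1m : 0 < L1m) (hL1M : 0 < L1M)
    (hN1m : 0 < N1m) (hN1M : 0 < N1M) (hLbar1 : 0 < Lbar1) (hNbar1 : 0 < Nbar1)
    (hμ : max 1 ν < μ) (hα₀₁ : 0 < α₀₁) (h12 : α₀₁ < α₀₂)
    (Lstar Nstar : (ℝ → ℝ) → ℝ → ℝ)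
    (hcont : ∀ z ∈ Icc α₀₁ α₀₂, ∀ f : ℝ → ℝ, ContinuousOn f (Icc 0 z) →
      ContinuousOn (Lstar f) (Ioc 0 z) ∧ ContinuousOn (Nstar f) (Ioc 0 z))
    (hLbd : ∀ z ∈ Icc α₀₁ α₀₂, ∀ f : ℝ → ℝ, ContinuousOn f (Icc 0 z) →
      ∀ η ∈ Ioc (0:ℝ) z, L1m * η ^ (-μ) ≤ Lstar f η ∧ Lstar f η ≤ L1M * η ^ (-μ))
    (hNbd : ∀ z ∈ Icc α₀₁ α₀₂, ∀ f : ℝ → ℝ, ContinuousOn f (Icc 0 z) →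
      ∀ η ∈ Ioc (0:ℝ) z, N1m * η ^ (-ν) ≤ Nstar f η ∧ Nstar f η ≤ N1M * η ^ (-ν))
    (hLlip : ∀ z ∈ Icc α₀₁ α₀₂, ∀ f fs : ℝ → ℝ,
      ContinuousOn f (Icc 0 z) → ContinuousOn fs (Icc 0 z) → ∀ η ∈ Ioc (0:ℝ) z,
        |Lstar f η - Lstar fs η| ≤ Lbar1 * supIcc z (fun x => f x - fs x))
    (hNlip : ∀ z ∈ Icc α₀₁ α₀₂, ∀ f fs : ℝ → ℝ,
      ContinuousOn f (Icc 0 z) → ContinuousOn fs (Icc 0 z) → ∀ η ∈ Ioc (0:ℝ) z,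
        |Nstar f η - Nstar fs η| ≤ Nbar1 * supIcc z (fun x => f x - fs x))
    (hlocal : ∀ f g : ℝ → ℝ, ∀ z' η : ℝ, 0 < η → η ≤ z' → EqOn f g (Icc 0 z') →
      Lstar f η = Lstar g η ∧ Nstar f η = Nstar g η)
    (hint1 : ∀ z ∈ Icc α₀₁ α₀₂, ∀ f : ℝ → ℝ, ContinuousOn f (Icc 0 z) →
      ∀ η ∈ Icc (0:ℝ) z, IntervalIntegrable (fun s => Nstar f s / Lstar f s) volume 0 η)
    (hint2 : ∀ z ∈ Icc α₀₁ α₀₂, ∀ f : ℝ → ℝ, ContinuousOn f (Icc 0 z) →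
      ∀ η ∈ Icc (0:ℝ) z,
        IntervalIntegrable (fun s => E1z z a Lstar Nstar f s / (s * Lstar f s)) volume 0 η)
    (hA1 : Ebar1 a μ ν L1m N1M Lbar1 Nbar1 α₀₂ * α₀₂ ^ μ / (L1m * μ) +
        Lbar1 * α₀₂ ^ (2 * μ) / (2 * μ * L1m ^ 2) < 1 / Dstar)
    (z zt : ℝ) (hz : z ∈ Icc α₀₁ α₀₂) (hzt : zt ∈ Icc α₀₁ α₀₂) (hzzt : z ≤ zt)
    (f1z f1zt : ℝ → ℝ)
    (hf1z : ContinuousOn f1z (Icc 0 z))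
    (hf1zfix : ∀ η ∈ Icc (0:ℝ) z, Uz z a Dstar Lstar Nstar f1z η = f1z η)
    (hf1zt : ContinuousOn f1zt (Icc 0 zt))
    (hf1ztfix : ∀ η ∈ Icc (0:ℝ) zt, Uz zt a Dstar Lstar Nstar f1zt η = f1zt η) :
    supIcc z (fun η => f1z η - f1zt η) ≤
      Dstar * α₀₂ ^ (μ - 1) /
          ((1 - Dstar * (Ebar1 a μ ν L1m N1M Lbar1 Nbar1 α₀₂ * α₀₂ ^ μ / (L1m * μ) +
              Lbar1 * α₀₂ ^ (2 * μ) / (2 * μ * L1m ^ 2))) * L1m) *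
        |z - zt| := by
  have hμ1 : 1 < μ := (le_max_left 1 ν).trans_lt hμ
  have hνμ : ν < μ := (le_max_right 1 ν).trans_lt hμ
  have hz0 : 0 < z := hα₀₁.trans_le hz.1
  have hzt0 : 0 < zt := hα₀₁.trans_le hzt.1
  have hzA : z ≤ α₀₂ := hz.2
  have hztA : zt ≤ α₀₂ := hzt.2
  have hA0 : 0 < α₀₂ := hα₀₁.trans h12
  have hf1zt' : ContinuousOn f1zt (Icc 0 z) := hf1zt.mono (Icc_subset_Icc le_rfl hzzt)
  set Δ := supIcc z (fun η => f1z η - f1zt η) with hΔdef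
  set Eb := Ebar1 a μ ν L1m N1M Lbar1 Nbar1 α₀₂ with hEbdef
  set A1 := Eb * α₀₂ ^ μ / (L1m * μ) + Lbar1 * α₀₂ ^ (2 * μ) / (2 * μ * L1m ^ 2) with hA1def
  -- positivity facts
  have hEb0 : 0 < Eb := by
    rw [hEbdef, Ebar1]
    have h1 : (0:ℝ) < μ + 1 := by linarith
    have h2 : (0:ℝ) < 2 * μ - ν + 1 := by linarith
    have h3 : (0:ℝ) < α₀₂ ^ (μ + 1) := Real.rpow_pos_of_pos hA0 _
    have h4 : (0:ℝ) < α₀₂ ^ (2 * μ - ν + 1) := Real.rpow_pos_of_pos hA0 _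
    positivity
  have hA1pos : 0 < A1 := by
    rw [hA1def]
    have h3 : (0:ℝ) < α₀₂ ^ μ := Real.rpow_pos_of_pos hA0 _
    have h4 : (0:ℝ) < α₀₂ ^ (2 * μ) := Real.rpow_pos_of_pos hA0 _
    positivity
  have hDA1 : Dstar * A1 < 1 := by
    have := (lt_div_iff₀ hD).1 hA1
    linarith [this]
  have h1mD : 0 < 1 - Dstar * A1 := by linarith
  -- sup facts
  have hΔ0 : 0 ≤ Δ := by
    rw [hΔdef, supIcc]; exact Real.iSup_nonneg fun _ => abs_nonneg _
  have hΔub : ∀ x ∈ Icc (0:ℝ) z, |f1z x - f1zt x| ≤ Δ := by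
    intro x hx
    rw [hΔdef, supIcc]
    have hb : BddAbove ((fun x => |f1z x - f1zt x|) '' Icc (0:ℝ) z) :=
      (isCompact_Icc.image_of_continuousOn ((hf1z.sub hf1zt').abs)).bddAbove
    rw [Set.image_eq_range] at hb
    exact le_ciSup hb ⟨x, hx⟩

  -- pointwise bounds on Lstar / Nstar
  have hLb1 : ∀ t ∈ Ioc (0:ℝ) z, L1m * t ^ (-μ) ≤ Lstar f1z t ∧ Lstar f1z t ≤ L1M * t ^ (-μ) :=
    fun t ht => hLbd z hz f1z hf1z t ht
  have hLb2 : ∀ t ∈ Ioc (0:ℝ) zt, L1m * t ^ (-μ) ≤ Lstar f1zt t ∧ Lstar f1zt t ≤ L1M * t ^ (-μ) :=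
    fun t ht => hLbd zt hzt f1zt hf1zt t ht
  have hNb1 : ∀ t ∈ Ioc (0:ℝ) z, N1m * t ^ (-ν) ≤ Nstar f1z t ∧ Nstar f1z t ≤ N1M * t ^ (-ν) :=
    fun t ht => hNbd z hz f1z hf1z t ht
  have hNb2 : ∀ t ∈ Ioc (0:ℝ) zt, N1m * t ^ (-ν) ≤ Nstar f1zt t ∧ Nstar f1zt t ≤ N1M * t ^ (-ν) :=
    fun t ht => hNbd zt hzt f1zt hf1zt t ht
  have hLpos1 : ∀ t ∈ Ioc (0:ℝ) z, 0 < Lstar f1z t := fun t ht =>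
    lt_of_lt_of_le (mul_pos hL1m (Real.rpow_pos_of_pos ht.1 _)) (hLb1 t ht).1
  have hLpos2 : ∀ t ∈ Ioc (0:ℝ) zt, 0 < Lstar f1zt t := fun t ht =>
    lt_of_lt_of_le (mul_pos hL1m (Real.rpow_pos_of_pos ht.1 _)) (hLb2 t ht).1
  have hNpos1 : ∀ t ∈ Ioc (0:ℝ) z, 0 < Nstar f1z t := fun t ht =>
    lt_of_lt_of_le (mul_pos hN1m (Real.rpow_pos_of_pos ht.1 _)) (hNb1 t ht).1
  have hNpos2 : ∀ t ∈ Ioc (0:ℝ) zt, 0 < Nstar f1zt t := fun t ht =>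
    lt_of_lt_of_le (mul_pos hN1m (Real.rpow_pos_of_pos ht.1 _)) (hNb2 t ht).1
  -- inverse bounds
  have hinv1 : ∀ s ∈ Ioc (0:ℝ) z, 1 / (s * Lstar f1z s) ≤ s ^ (μ - 1) / L1m := by
    intro s hs
    apply one_div_le_rpow_div hL1m hs.1
    have h1 : L1m * s ^ (-(μ - 1)) = s * (L1m * s ^ (-μ)) := by
      rw [show -(μ - 1) = 1 + -μ by ring, Real.rpow_add hs.1, Real.rpow_one]; ring
    rw [h1]
    exact mul_le_mul_of_nonneg_left (hLb1 s hs).1 hs.1.le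
  have hinv2 : ∀ s ∈ Ioc (0:ℝ) zt, 1 / (s * Lstar f1zt s) ≤ s ^ (μ - 1) / L1m := by
    intro s hs
    apply one_div_le_rpow_div hL1m hs.1
    have h1 : L1m * s ^ (-(μ - 1)) = s * (L1m * s ^ (-μ)) := by
      rw [show -(μ - 1) = 1 + -μ by ring, Real.rpow_add hs.1, Real.rpow_one]; ring
    rw [h1]
    exact mul_le_mul_of_nonneg_left (hLb2 s hs).1 hs.1.le
  -- nonnegativity of the inner integral I
  have hI1nn : ∀ s ∈ Icc (0:ℝ) z, 0 ≤ ∫ t in (0:ℝ)..s, Nstar f1z t / Lstar f1z t := by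
    intro s hs
    refine intervalIntegral.integral_nonneg_of_ae_restrict hs.1 (ae_Icc_pos fun t ht => ?_)
    have ht' : t ∈ Ioc (0:ℝ) z := ⟨ht.1, ht.2.trans hs.2⟩
    exact div_nonneg (hNpos1 t ht').le (hLpos1 t ht').le
  have hI2nn : ∀ s ∈ Icc (0:ℝ) zt, 0 ≤ ∫ t in (0:ℝ)..s, Nstar f1zt t / Lstar f1zt t := by
    intro s hs
    refine intervalIntegral.integral_nonneg_of_ae_restrict hs.1 (ae_Icc_pos fun t ht => ?_)
    have ht' : t ∈ Ioc (0:ℝ) zt := ⟨ht.1, ht.2.trans hs.2⟩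
    exact div_nonneg (hNpos2 t ht').le (hLpos2 t ht').le
  -- integrability of the kernels
  have hK1int : IntervalIntegrable (fun s => E1z z a Lstar Nstar f1z s / (s * Lstar f1z s))
      volume 0 z := hint2 z hz f1z hf1z z ⟨hz0.le, le_rfl⟩
  have hK2int : IntervalIntegrable (fun s => E1z z a Lstar Nstar f1zt s / (s * Lstar f1zt s))
      volume 0 z := hint2 z hz f1zt hf1zt' z ⟨hz0.le, le_rfl⟩
  have hK3int : IntervalIntegrable (fun s => E1z zt a Lstar Nstar f1zt s / (s * Lstar f1zt s))
      volume 0 zt := hint2 zt hzt f1zt hf1zt zt ⟨hzt0.le, le_rfl⟩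

  -- Lipschitz bound on the difference of inner integrals
  have hc1 : (0:ℝ) ≤ Nbar1 * Δ / L1m := by positivity
  have hc2 : (0:ℝ) ≤ N1M * Lbar1 * Δ / L1m ^ 2 := by positivity
  have hμ1' : (0:ℝ) < μ + 1 := by linarith
  have h2μν : (0:ℝ) < 2 * μ - ν + 1 := by linarith
  have hIdiff : ∀ s ∈ Icc (0:ℝ) z,
      |(∫ t in (0:ℝ)..s, Nstar f1z t / Lstar f1z t) -
        ∫ t in (0:ℝ)..s, Nstar f1zt t / Lstar f1zt t| ≤
        Nbar1 * Δ / L1m * s ^ (μ + 1) / (μ + 1) +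
          N1M * Lbar1 * Δ / L1m ^ 2 * s ^ (2 * μ - ν + 1) / (2 * μ - ν + 1) := by
    intro s hs
    have hintf : IntervalIntegrable (fun t => Nstar f1z t / Lstar f1z t) volume 0 s :=
      hint1 z hz f1z hf1z s hs
    have hintg : IntervalIntegrable (fun t => Nstar f1zt t / Lstar f1zt t) volume 0 s :=
      hint1 z hz f1zt hf1zt' s hs
    rw [← intervalIntegral.integral_sub hintf hintg]
    refine (intervalIntegral.abs_integral_le_integral_abs hs.1).trans ?_
    have hmono : (∫ t in (0:ℝ)..s, |Nstar f1z t / Lstar f1z t - Nstar f1zt t / Lstar f1zt t|)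
        ≤ ∫ t in (0:ℝ)..s,
            (Nbar1 * Δ / L1m * t ^ μ + N1M * Lbar1 * Δ / L1m ^ 2 * t ^ (2 * μ - ν)) := by
      refine intervalIntegral.integral_mono_ae_restrict hs.1 (hintf.sub hintg).abs
        (((_root_.intervalIntegral.intervalIntegrable_rpow' (by linarith)).const_mul _).add
          ((_root_.intervalIntegral.intervalIntegrable_rpow' (by linarith)).const_mul _))
        (ae_Icc_pos fun t ht => ?_)
      dsimp only
      have ht' : t ∈ Ioc (0:ℝ) z := ⟨ht.1, ht.2.trans hs.2⟩
      have ht2 : t ∈ Ioc (0:ℝ) zt := ⟨ht.1, ht'.2.trans hzzt⟩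
      have hLf := hLpos1 t ht'
      have hLg := hLpos2 t ht2
      have hid : Nstar f1z t / Lstar f1z t - Nstar f1zt t / Lstar f1zt t
          = (Nstar f1z t - Nstar f1zt t) / Lstar f1z t
            + Nstar f1zt t * (Lstar f1zt t - Lstar f1z t) / (Lstar f1z t * Lstar f1zt t) := by
        field_simp
        ring
      rw [hid]
      refine (abs_add_le _ _).trans ?_
      have hb1 : |(Nstar f1z t - Nstar f1zt t) / Lstar f1z t| ≤ (Nbar1 * Δ) * (t ^ μ / L1m) := by
        refine abs_div_bound2 hLf ?_ ?_ (by positivity)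
        · have hl := hNlip z hz f1z f1zt hf1z hf1zt' t ht'
          rw [← hΔdef] at hl
          exact hl
        · exact one_div_le_rpow_div hL1m ht.1 (hLb1 t ht').1
      have hb2 : |Nstar f1zt t * (Lstar f1zt t - Lstar f1z t) / (Lstar f1z t * Lstar f1zt t)|
          ≤ (N1M * t ^ (-ν)) * (Lbar1 * Δ) * (t ^ (2 * μ) / L1m ^ 2) := by
        refine abs_div_bound3 (mul_pos hLf hLg) ?_ ?_ ?_
          (mul_nonneg hN1M.le (Real.rpow_nonneg ht.1.le _)) (mul_nonneg hLbar1.le hΔ0)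
        · rw [abs_of_pos (hNpos2 t ht2)]; exact (hNb2 t ht2).2
        · rw [abs_sub_comm]
          have hl := hLlip z hz f1z f1zt hf1z hf1zt' t ht'
          rw [← hΔdef] at hl
          exact hl
        · refine one_div_le_rpow_div (by positivity) ht.1 ?_
          have he : L1m ^ 2 * t ^ (-(2 * μ)) = (L1m * t ^ (-μ)) * (L1m * t ^ (-μ)) := by
            rw [show -(2 * μ) = -μ + -μ by ring, Real.rpow_add ht.1]; ring
          rw [he]
          exact mul_le_mul (hLb1 t ht').1 (hLb2 t ht2).1 (mul_pos hL1m (Real.rpow_pos_of_pos ht.1 _)).le hLf.le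
      refine (add_le_add hb1 hb2).trans (le_of_eq ?_)
      rw [show (2:ℝ) * μ - ν = -ν + 2 * μ by ring, Real.rpow_add ht.1]
      ring
    refine hmono.trans ?_
    rw [intervalIntegral.integral_add ((_root_.intervalIntegral.intervalIntegrable_rpow' (by linarith)).const_mul _)
        ((_root_.intervalIntegral.intervalIntegrable_rpow' (by linarith)).const_mul _),
      integral_const_rpow' s (by linarith : (0:ℝ) < μ),
      integral_const_rpow' s (by linarith : (0:ℝ) < 2 * μ - ν)]
  -- Lipschitz bound on E (same z, different f)
  have hEdiff : ∀ s ∈ Icc (0:ℝ) z,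
      |E1z z a Lstar Nstar f1z s - E1z z a Lstar Nstar f1zt s| ≤ Eb * Δ := by
    intro s hs
    have hx : 0 ≤ z * a * ∫ t in (0:ℝ)..s, Nstar f1z t / Lstar f1z t :=
      mul_nonneg (mul_nonneg hz0.le ha.le) (hI1nn s hs)
    have hy : 0 ≤ z * a * ∫ t in (0:ℝ)..s, Nstar f1zt t / Lstar f1zt t :=
      mul_nonneg (mul_nonneg hz0.le ha.le) (hI2nn s ⟨hs.1, hs.2.trans hzzt⟩)
    have h1 := exp_neg_lip hx hy
    unfold E1z
    refine h1.trans ?_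
    rw [← mul_sub, abs_mul, abs_of_nonneg (mul_nonneg hz0.le ha.le)]
    have h2 := hIdiff s hs
    have hsa : s ≤ α₀₂ := hs.2.trans hzA
    have hb1 : s ^ (μ + 1) ≤ α₀₂ ^ (μ + 1) := Real.rpow_le_rpow hs.1 hsa (by linarith)
    have hb2 : s ^ (2 * μ - ν + 1) ≤ α₀₂ ^ (2 * μ - ν + 1) := Real.rpow_le_rpow hs.1 hsa (by linarith)
    have hEbeq : Eb * Δ = (α₀₂ * a) *
        (Nbar1 * Δ / L1m * α₀₂ ^ (μ + 1) / (μ + 1) +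
          N1M * Lbar1 * Δ / L1m ^ 2 * α₀₂ ^ (2 * μ - ν + 1) / (2 * μ - ν + 1)) := by
      rw [hEbdef, Ebar1]
      field_simp
    rw [hEbeq]
    have hza : z * a ≤ α₀₂ * a := mul_le_mul_of_nonneg_right hzA ha.le
    refine mul_le_mul hza (h2.trans ?_) (abs_nonneg _) (by positivity)
    refine add_le_add ?_ ?_
    · exact (div_le_div_iff_of_pos_right hμ1').2 (mul_le_mul_of_nonneg_left hb1 hc1)
    · exact (div_le_div_iff_of_pos_right h2μν).2 (mul_le_mul_of_nonneg_left hb2 hc2)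
  -- E ≤ 1
  have hE1le : ∀ s ∈ Icc (0:ℝ) z, E1z z a Lstar Nstar f1z s ≤ 1 := by
    intro s hs
    unfold E1z
    exact Real.exp_le_one_iff.2 (neg_nonpos.2
      (mul_nonneg (mul_nonneg hz0.le ha.le) (hI1nn s hs)))
  have hE2le : ∀ s ∈ Icc (0:ℝ) zt, E1z z a Lstar Nstar f1zt s ≤ 1 := by
    intro s hs
    unfold E1z
    exact Real.exp_le_one_iff.2 (neg_nonpos.2
      (mul_nonneg (mul_nonneg hz0.le ha.le) (hI2nn s hs)))
  have hE3le : ∀ s ∈ Icc (0:ℝ) zt, E1z zt a Lstar Nstar f1zt s ≤ 1 := by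
    intro s hs
    unfold E1z
    exact Real.exp_le_one_iff.2 (neg_nonpos.2
      (mul_nonneg (mul_nonneg hzt0.le ha.le) (hI2nn s hs)))
  -- kernel difference bound (same z, different f)
  have hKdiff : ∀ s ∈ Icc (0:ℝ) z,
      |E1z z a Lstar Nstar f1z s / (s * Lstar f1z s) -
        E1z z a Lstar Nstar f1zt s / (s * Lstar f1zt s)| ≤
      Eb * Δ / L1m * s ^ (μ - 1) + Lbar1 * Δ / L1m ^ 2 * s ^ (2 * μ - 1) := by
    intro s hs
    rcases eq_or_lt_of_le hs.1 with h0 | h0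
    · rw [← h0]
      simp [Real.zero_rpow (by linarith : μ - 1 ≠ 0),
        Real.zero_rpow (by linarith : 2 * μ - 1 ≠ 0)]
    · have hs' : s ∈ Ioc (0:ℝ) z := ⟨h0, hs.2⟩
      have hs2 : s ∈ Ioc (0:ℝ) zt := ⟨h0, hs.2.trans hzzt⟩
      have hLf := hLpos1 s hs'
      have hLg := hLpos2 s hs2
      have hid : E1z z a Lstar Nstar f1z s / (s * Lstar f1z s) -
          E1z z a Lstar Nstar f1zt s / (s * Lstar f1zt s)
          = (E1z z a Lstar Nstar f1z s - E1z z a Lstar Nstar f1zt s) / (s * Lstar f1z s)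
            + E1z z a Lstar Nstar f1zt s * (Lstar f1zt s - Lstar f1z s) /
                (s * (Lstar f1z s * Lstar f1zt s)) := by
        field_simp
        ring
      rw [hid]
      refine (abs_add_le _ _).trans ?_
      have hb1 : |(E1z z a Lstar Nstar f1z s - E1z z a Lstar Nstar f1zt s) / (s * Lstar f1z s)|
          ≤ (Eb * Δ) * (s ^ (μ - 1) / L1m) := by
        refine abs_div_bound2 (mul_pos h0 hLf) (hEdiff s hs) (hinv1 s hs')
          (mul_nonneg hEb0.le hΔ0)
      have hb2 : |E1z z a Lstar Nstar f1zt s * (Lstar f1zt s - Lstar f1z s) /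
            (s * (Lstar f1z s * Lstar f1zt s))|
          ≤ 1 * (Lbar1 * Δ) * (s ^ (2 * μ - 1) / L1m ^ 2) := by
        refine abs_div_bound3 (mul_pos h0 (mul_pos hLf hLg)) ?_ ?_ ?_ zero_le_one
          (mul_nonneg hLbar1.le hΔ0)
        · have hpos : 0 < E1z z a Lstar Nstar f1zt s := by unfold E1z; exact Real.exp_pos _
          rw [abs_of_pos hpos]
          exact hE2le s ⟨hs.1, hs.2.trans hzzt⟩
        · rw [abs_sub_comm]
          have hl := hLlip z hz f1z f1zt hf1z hf1zt' s hs'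
          rw [← hΔdef] at hl
          exact hl
        · refine one_div_le_rpow_div (by positivity) h0 ?_
          have he : L1m ^ 2 * s ^ (-(2 * μ - 1)) = s * ((L1m * s ^ (-μ)) * (L1m * s ^ (-μ))) := by
            rw [show -(2 * μ - 1) = 1 + (-μ + -μ) by ring, Real.rpow_add h0,
              Real.rpow_add h0, Real.rpow_one]
            ring
          rw [he]
          refine mul_le_mul_of_nonneg_left ?_ h0.le
          exact mul_le_mul (hLb1 s hs').1 (hLb2 s hs2).1
            (mul_pos hL1m (Real.rpow_pos_of_pos h0 _)).le hLf.le
      refine (add_le_add hb1 hb2).trans (le_of_eq ?_)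
      ring
  have hEpos : ∀ (w : ℝ) (f : ℝ → ℝ) (s : ℝ), 0 < E1z w a Lstar Nstar f s := by
    intro w f s; unfold E1z; exact Real.exp_pos _
  -- pointwise bounds for T2 integrand
  have hT2ptwise : ∀ s ∈ Icc (0:ℝ) z,
      0 ≤ E1z z a Lstar Nstar f1zt s / (s * Lstar f1zt s) -
          E1z zt a Lstar Nstar f1zt s / (s * Lstar f1zt s) ∧
      E1z z a Lstar Nstar f1zt s / (s * Lstar f1zt s) -
          E1z zt a Lstar Nstar f1zt s / (s * Lstar f1zt s) ≤
        (zt - z) / z / L1m * s ^ (μ - 1) := by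
    intro s hs
    rcases eq_or_lt_of_le hs.1 with h0 | h0
    · rw [← h0]
      simp [Real.zero_rpow (by linarith : μ - 1 ≠ 0)]
    · have hs2 : s ∈ Ioc (0:ℝ) zt := ⟨h0, hs.2.trans hzzt⟩
      have hLg := hLpos2 s hs2
      have hsL : 0 < s * Lstar f1zt s := mul_pos h0 hLg
      have hI : 0 ≤ ∫ t in (0:ℝ)..s, Nstar f1zt t / Lstar f1zt t :=
        hI2nn s ⟨hs.1, hs.2.trans hzzt⟩
      have hxy : z * a * (∫ t in (0:ℝ)..s, Nstar f1zt t / Lstar f1zt t) ≤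
          zt * a * ∫ t in (0:ℝ)..s, Nstar f1zt t / Lstar f1zt t :=
        mul_le_mul_of_nonneg_right (mul_le_mul_of_nonneg_right hzzt ha.le) hI
      have hEord : E1z zt a Lstar Nstar f1zt s ≤ E1z z a Lstar Nstar f1zt s := by
        unfold E1z
        exact Real.exp_le_exp.2 (neg_le_neg hxy)
      have hnum : E1z z a Lstar Nstar f1zt s - E1z zt a Lstar Nstar f1zt s ≤ (zt - z) / z := by
        unfold E1z
        refine exp_neg_sub_le_of_ratio ?_ hxy (div_nonneg (by linarith) hz0.le) (le_of_eq ?_)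
        · exact mul_nonneg (mul_nonneg hz0.le ha.le) hI
        · field_simp
      rw [div_sub_div_same]
      constructor
      · exact div_nonneg (sub_nonneg.2 hEord) hsL.le
      · calc (E1z z a Lstar Nstar f1zt s - E1z zt a Lstar Nstar f1zt s) / (s * Lstar f1zt s)
            = (E1z z a Lstar Nstar f1zt s - E1z zt a Lstar Nstar f1zt s) *
              (1 / (s * Lstar f1zt s)) := by rw [div_eq_mul_one_div]
          _ ≤ ((zt - z) / z) * (s ^ (μ - 1) / L1m) :=
              mul_le_mul hnum (hinv2 s hs2) (by positivity)
                (div_nonneg (by linarith) hz0.le)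
          _ = (zt - z) / z / L1m * s ^ (μ - 1) := by ring
  -- main pointwise estimate
  have hbound : ∀ η ∈ Icc (0:ℝ) z, |f1z η - f1zt η| ≤
      Dstar * (A1 * Δ + (zt - z) * α₀₂ ^ (μ - 1) / L1m) := by
    intro η hη
    have hη' : η ∈ Icc (0:ℝ) zt := ⟨hη.1, hη.2.trans hzzt⟩
    have hK1η := II_mono_of_le hK1int hz0.le hη.1 hη.2 le_rfl
    have hK2η := II_mono_of_le hK2int hz0.le hη.1 hη.2 le_rfl
    have hK3ηz := II_mono_of_le hK3int hzt0.le hη.1 hη.2 hzzt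
    have hK3zzt := II_mono_of_le hK3int hzt0.le hz0.le hzzt le_rfl
    have e1 : f1z η = Dstar *
        ∫ s in η..z, E1z z a Lstar Nstar f1z s / (s * Lstar f1z s) := by
      rw [← hf1zfix η hη]
      unfold Uz F1z
      rw [intervalIntegral.integral_interval_sub_left hK1int (hint2 z hz f1z hf1z η hη)]
    have e2 : f1zt η = Dstar *
        ((∫ s in η..z, E1z zt a Lstar Nstar f1zt s / (s * Lstar f1zt s)) +
          ∫ s in z..zt, E1z zt a Lstar Nstar f1zt s / (s * Lstar f1zt s)) := by
      rw [← hf1ztfix η hη']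
      unfold Uz F1z
      rw [intervalIntegral.integral_interval_sub_left hK3int (hint2 zt hzt f1zt hf1zt η hη'),
        ← intervalIntegral.integral_add_adjacent_intervals hK3ηz hK3zzt]
    have hT1eq : (∫ s in η..z, (E1z z a Lstar Nstar f1z s / (s * Lstar f1z s) -
          E1z z a Lstar Nstar f1zt s / (s * Lstar f1zt s)))
        = (∫ s in η..z, E1z z a Lstar Nstar f1z s / (s * Lstar f1z s)) -
          ∫ s in η..z, E1z z a Lstar Nstar f1zt s / (s * Lstar f1zt s) :=
      intervalIntegral.integral_sub hK1η hK2η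
    have hT2eq : (∫ s in η..z, (E1z z a Lstar Nstar f1zt s / (s * Lstar f1zt s) -
          E1z zt a Lstar Nstar f1zt s / (s * Lstar f1zt s)))
        = (∫ s in η..z, E1z z a Lstar Nstar f1zt s / (s * Lstar f1zt s)) -
          ∫ s in η..z, E1z zt a Lstar Nstar f1zt s / (s * Lstar f1zt s) :=
      intervalIntegral.integral_sub hK2η hK3ηz
    have hdec : f1z η - f1zt η = Dstar *
        ((∫ s in η..z, (E1z z a Lstar Nstar f1z s / (s * Lstar f1z s) -
            E1z z a Lstar Nstar f1zt s / (s * Lstar f1zt s))) +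
          (∫ s in η..z, (E1z z a Lstar Nstar f1zt s / (s * Lstar f1zt s) -
            E1z zt a Lstar Nstar f1zt s / (s * Lstar f1zt s))) -
          ∫ s in z..zt, E1z zt a Lstar Nstar f1zt s / (s * Lstar f1zt s)) := by
      rw [e1, e2, hT1eq, hT2eq]; ring
    -- bound on T1
    have hGc1 : (0:ℝ) ≤ Eb * Δ / L1m := by positivity
    have hGc2 : (0:ℝ) ≤ Lbar1 * Δ / L1m ^ 2 := by positivity
    have hGint : ∀ c d : ℝ, IntervalIntegrable
        (fun s => Eb * Δ / L1m * s ^ (μ - 1) + Lbar1 * Δ / L1m ^ 2 * s ^ (2 * μ - 1))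
        volume c d := fun c d =>
      ((_root_.intervalIntegral.intervalIntegrable_rpow' (by linarith)).const_mul _).add
        ((_root_.intervalIntegral.intervalIntegrable_rpow' (by linarith)).const_mul _)
    have hT1b : |∫ s in η..z, (E1z z a Lstar Nstar f1z s / (s * Lstar f1z s) -
          E1z z a Lstar Nstar f1zt s / (s * Lstar f1zt s))| ≤ A1 * Δ := by
      refine (intervalIntegral.abs_integral_le_integral_abs hη.2).trans ?_
      have hmono : (∫ s in η..z, |E1z z a Lstar Nstar f1z s / (s * Lstar f1z s) -
            E1z z a Lstar Nstar f1zt s / (s * Lstar f1zt s)|) ≤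
          ∫ s in η..z, (Eb * Δ / L1m * s ^ (μ - 1) + Lbar1 * Δ / L1m ^ 2 * s ^ (2 * μ - 1)) :=
        intervalIntegral.integral_mono_on hη.2 (hK1η.sub hK2η).abs (hGint η z)
          (fun s hs => hKdiff s ⟨hη.1.trans hs.1, hs.2⟩)
      refine hmono.trans ?_
      have hsplit := intervalIntegral.integral_interval_sub_left (hGint 0 z) (hGint 0 η)
      have hnn : 0 ≤ ∫ s in (0:ℝ)..η,
          (Eb * Δ / L1m * s ^ (μ - 1) + Lbar1 * Δ / L1m ^ 2 * s ^ (2 * μ - 1)) := by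
        refine intervalIntegral.integral_nonneg hη.1 fun x hx => ?_
        have h1 : (0:ℝ) ≤ x ^ (μ - 1) := Real.rpow_nonneg hx.1 _
        have h2 : (0:ℝ) ≤ x ^ (2 * μ - 1) := Real.rpow_nonneg hx.1 _
        positivity
      have hstep : (∫ s in η..z,
          (Eb * Δ / L1m * s ^ (μ - 1) + Lbar1 * Δ / L1m ^ 2 * s ^ (2 * μ - 1))) ≤
          ∫ s in (0:ℝ)..z,
          (Eb * Δ / L1m * s ^ (μ - 1) + Lbar1 * Δ / L1m ^ 2 * s ^ (2 * μ - 1)) := by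
        rw [← hsplit]; linarith
      refine hstep.trans ?_
      rw [intervalIntegral.integral_add
          ((_root_.intervalIntegral.intervalIntegrable_rpow' (by linarith)).const_mul _)
          ((_root_.intervalIntegral.intervalIntegrable_rpow' (by linarith)).const_mul _),
        integral_const_rpow' z (by linarith : (0:ℝ) < μ - 1),
        integral_const_rpow' z (by linarith : (0:ℝ) < 2 * μ - 1),
        show μ - 1 + 1 = μ by ring, show 2 * μ - 1 + 1 = 2 * μ by ring, hA1def]
      have e1' : z ^ μ ≤ α₀₂ ^ μ := Real.rpow_le_rpow hz0.le hzA hμpos.le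
      have e2' : z ^ (2 * μ) ≤ α₀₂ ^ (2 * μ) := Real.rpow_le_rpow hz0.le hzA (by linarith)
      have hexp : (Eb * α₀₂ ^ μ / (L1m * μ) + Lbar1 * α₀₂ ^ (2 * μ) / (2 * μ * L1m ^ 2)) * Δ
          = Eb * Δ / L1m * α₀₂ ^ μ / μ + Lbar1 * Δ / L1m ^ 2 * α₀₂ ^ (2 * μ) / (2 * μ) := by
        field_simp
      rw [hexp]
      exact add_le_add ((div_le_div_iff_of_pos_right hμpos).2 (mul_le_mul_of_nonneg_left e1' hGc1))
        ((div_le_div_iff_of_pos_right (by linarith)).2 (mul_le_mul_of_nonneg_left e2' hGc2))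
    -- bounds on T2
    have hT2nn : 0 ≤ ∫ s in η..z, (E1z z a Lstar Nstar f1zt s / (s * Lstar f1zt s) -
        E1z zt a Lstar Nstar f1zt s / (s * Lstar f1zt s)) :=
      intervalIntegral.integral_nonneg hη.2
        (fun s hs => (hT2ptwise s ⟨hη.1.trans hs.1, hs.2⟩).1)
    have hB2int : ∀ c d : ℝ, IntervalIntegrable
        (fun s => (zt - z) / z / L1m * s ^ (μ - 1)) volume c d := fun c d =>
      (_root_.intervalIntegral.intervalIntegrable_rpow' (by linarith)).const_mul _
    have hB2c : (0:ℝ) ≤ (zt - z) / z / L1m :=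
      div_nonneg (div_nonneg (by linarith) hz0.le) hL1m.le
    have hT2b : (∫ s in η..z, (E1z z a Lstar Nstar f1zt s / (s * Lstar f1zt s) -
        E1z zt a Lstar Nstar f1zt s / (s * Lstar f1zt s))) ≤
        (zt - z) * α₀₂ ^ (μ - 1) / L1m := by
      have hmono : (∫ s in η..z, (E1z z a Lstar Nstar f1zt s / (s * Lstar f1zt s) -
          E1z zt a Lstar Nstar f1zt s / (s * Lstar f1zt s))) ≤
          ∫ s in η..z, ((zt - z) / z / L1m * s ^ (μ - 1)) :=
        intervalIntegral.integral_mono_on hη.2 (hK2η.sub hK3ηz) (hB2int η z)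
          (fun s hs => (hT2ptwise s ⟨hη.1.trans hs.1, hs.2⟩).2)
      refine hmono.trans ?_
      have hsplit := intervalIntegral.integral_interval_sub_left (hB2int 0 z) (hB2int 0 η)
      have hnn : 0 ≤ ∫ s in (0:ℝ)..η, ((zt - z) / z / L1m * s ^ (μ - 1)) := by
        refine intervalIntegral.integral_nonneg hη.1 fun x hx => ?_
        exact mul_nonneg hB2c (Real.rpow_nonneg hx.1 _)
      have hstep : (∫ s in η..z, ((zt - z) / z / L1m * s ^ (μ - 1))) ≤
          ∫ s in (0:ℝ)..z, ((zt - z) / z / L1m * s ^ (μ - 1)) := by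
        rw [← hsplit]; linarith
      refine hstep.trans ?_
      rw [integral_const_rpow' z (by linarith : (0:ℝ) < μ - 1),
        show μ - 1 + 1 = μ by ring]
      have hzμ : z ^ μ = z ^ (μ - 1) * z := by
        rw [show μ = μ - 1 + 1 by ring]
        rw [Real.rpow_add hz0, Real.rpow_one]
        ring_nf
      have heq : (zt - z) / z / L1m * z ^ μ / μ = (zt - z) * z ^ (μ - 1) / (L1m * μ) := by
        rw [hzμ]; field_simp
      rw [heq]
      refine div_le_div₀ (mul_nonneg (by linarith) (Real.rpow_nonneg hA0.le _)) ?_ hL1m ?_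
      · exact mul_le_mul_of_nonneg_left (Real.rpow_le_rpow hz0.le hzA (by linarith))
          (by linarith)
      · exact le_mul_of_one_le_right hL1m.le hμ1.le
    -- bounds on T3
    have hT3nn : 0 ≤ ∫ s in z..zt, E1z zt a Lstar Nstar f1zt s / (s * Lstar f1zt s) := by
      refine intervalIntegral.integral_nonneg hzzt fun s hs => ?_
      have hs0 : 0 < s := hz0.trans_le hs.1
      exact div_nonneg (hEpos _ _ _).le (mul_pos hs0 (hLpos2 s ⟨hs0, hs.2⟩)).le
    have hT3b : (∫ s in z..zt, E1z zt a Lstar Nstar f1zt s / (s * Lstar f1zt s)) ≤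
        (zt - z) * α₀₂ ^ (μ - 1) / L1m := by
      have hmono : (∫ s in z..zt, E1z zt a Lstar Nstar f1zt s / (s * Lstar f1zt s)) ≤
          ∫ _ in z..zt, (α₀₂ ^ (μ - 1) / L1m) := by
        refine intervalIntegral.integral_mono_on hzzt hK3zzt intervalIntegrable_const
          (fun s hs => ?_)
        have hs0 : 0 < s := hz0.trans_le hs.1
        have hs2 : s ∈ Ioc (0:ℝ) zt := ⟨hs0, hs.2⟩
        calc E1z zt a Lstar Nstar f1zt s / (s * Lstar f1zt s)
            = E1z zt a Lstar Nstar f1zt s * (1 / (s * Lstar f1zt s)) := by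
              rw [div_eq_mul_one_div]
          _ ≤ 1 * (α₀₂ ^ (μ - 1) / L1m) := by
              refine mul_le_mul (hE3le s ⟨hs0.le, hs.2⟩) ((hinv2 s hs2).trans ?_)
                (one_div_nonneg.2 (mul_pos hs0 (hLpos2 s hs2)).le) zero_le_one
              exact (div_le_div_iff_of_pos_right hL1m).2
                (Real.rpow_le_rpow hs0.le (hs.2.trans hztA) (by linarith))
          _ = α₀₂ ^ (μ - 1) / L1m := one_mul _
      rw [intervalIntegral.integral_const, smul_eq_mul] at hmono
      refine hmono.trans (le_of_eq ?_)
      ring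
    -- assemble
    rw [hdec, abs_mul, abs_of_pos hD]
    refine mul_le_mul_of_nonneg_left ?_ hD.le
    have habs3 : |(∫ s in η..z, (E1z z a Lstar Nstar f1z s / (s * Lstar f1z s) -
            E1z z a Lstar Nstar f1zt s / (s * Lstar f1zt s))) +
          (∫ s in η..z, (E1z z a Lstar Nstar f1zt s / (s * Lstar f1zt s) -
            E1z zt a Lstar Nstar f1zt s / (s * Lstar f1zt s))) -
          ∫ s in z..zt, E1z zt a Lstar Nstar f1zt s / (s * Lstar f1zt s)|
        ≤ |∫ s in η..z, (E1z z a Lstar Nstar f1z s / (s * Lstar f1z s) -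
            E1z z a Lstar Nstar f1zt s / (s * Lstar f1zt s))| +
          |(∫ s in η..z, (E1z z a Lstar Nstar f1zt s / (s * Lstar f1zt s) -
            E1z zt a Lstar Nstar f1zt s / (s * Lstar f1zt s))) -
          ∫ s in z..zt, E1z zt a Lstar Nstar f1zt s / (s * Lstar f1zt s)| := by
      rw [add_sub_assoc]
      exact abs_add_le _ _
    refine habs3.trans ?_
    have h2 : |(∫ s in η..z, (E1z z a Lstar Nstar f1zt s / (s * Lstar f1zt s) -
            E1z zt a Lstar Nstar f1zt s / (s * Lstar f1zt s))) -
          ∫ s in z..zt, E1z zt a Lstar Nstar f1zt s / (s * Lstar f1zt s)|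
        ≤ (zt - z) * α₀₂ ^ (μ - 1) / L1m :=
      abs_le.2 ⟨by linarith, by linarith⟩
    linarith
  -- take the sup and conclude
  have hne : Nonempty (Icc (0:ℝ) z) := ⟨⟨0, le_rfl, hz0.le⟩⟩
  have hsup : Δ ≤ Dstar * (A1 * Δ + (zt - z) * α₀₂ ^ (μ - 1) / L1m) := by
    conv_lhs => rw [hΔdef, supIcc]
    exact ciSup_le fun p => hbound p.1 p.2
  have habsz : |z - zt| = zt - z := by
    rw [abs_sub_comm]; exact abs_of_nonneg (by linarith)
  rw [habsz]
  have key : Δ * (1 - Dstar * A1) ≤ Dstar * ((zt - z) * α₀₂ ^ (μ - 1) / L1m) := by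
    calc Δ * (1 - Dstar * A1) = Δ - Dstar * (A1 * Δ) := by ring
      _ ≤ Dstar * (A1 * Δ + (zt - z) * α₀₂ ^ (μ - 1) / L1m) - Dstar * (A1 * Δ) := by
          have hexpand : Dstar * (A1 * Δ + (zt - z) * α₀₂ ^ (μ - 1) / L1m)
              = Dstar * (A1 * Δ) + Dstar * ((zt - z) * α₀₂ ^ (μ - 1) / L1m) := by ring
          linarith [hsup]
      _ = Dstar * ((zt - z) * α₀₂ ^ (μ - 1) / L1m) := by ring
  have hfinal : Δ ≤ Dstar * ((zt - z) * α₀₂ ^ (μ - 1) / L1m) / (1 - Dstar * A1) := by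
    rw [le_div_iff₀ h1mD]; exact key
  refine hfinal.trans (le_of_eq ?_)
  field_simp
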